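/- Let n be an integer with 9 ≤ n ≤ 11 and let b satisfy 0 < b ≤ 1/(2n+2). Then (1 + (A(b)/2)·√(n(n-2))) · (1/P(b)) ≤ ω(b)/4. -/
import Mathlib


/-- The quantity `a(b) = b(2+(n-2)b)² / (2(2+(n-3)b))`. -/
noncomputable def aFun (n : ℕ) (b : ℝ) : ℝ :=
  b * (2 + ((n : ℝ) - 2) * b) ^ 2 / (2 * (2 + ((n : ℝ) - 3) * b))

/-- The quantity `γ(b) = b / (2+(n-3)b)`. -/
noncomputable def gammaFun (n : ℕ) (b : ℝ) : ℝ :=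
  b / (2 + ((n : ℝ) - 3) * b)

/-- The quantity
`ρ(b) = b - 2(n-1)γ(b)(1-2b)/n² - 2(n-1)(1+γ(b))(n²b²-2(n-1)(a(b)-b)(1-2b))/(n²(1+2(n-1)a(b)))`. -/
noncomputable def rhoFun (n : ℕ) (b : ℝ) : ℝ :=
  b - 2 * ((n : ℝ) - 1) * gammaFun n b * (1 - 2 * b) / (n : ℝ) ^ 2 -
    2 * ((n : ℝ) - 1) * (1 + gammaFun n b) *
      ((n : ℝ) ^ 2 * b ^ 2 - 2 * ((n : ℝ) - 1) * (aFun n b - b) * (1 - 2 * b)) /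
      ((n : ℝ) ^ 2 * (1 + 2 * ((n : ℝ) - 1) * aFun n b))


/-- The quantity `ω(b) = √(27(2+(n-2)b)·b(1+(n-2)b)² / (8n²ρ(b)³(2+(n-3)b)²))`. -/
noncomputable def omegaFun (n : ℕ) (b : ℝ) : ℝ :=
  Real.sqrt (27 * (2 + ((n : ℝ) - 2) * b) * (b * (1 + ((n : ℝ) - 2) * b) ^ 2) /
    (8 * (n : ℝ) ^ 2 * rhoFun n b ^ 3 * (2 + ((n : ℝ) - 3) * b) ^ 2))

/-- The quantity `A(b) = (2+8b)/((n-1)(n-4)) + (4/n)(2b+(n-2)a(b))`. -/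
noncomputable def AFun (n : ℕ) (b : ℝ) : ℝ :=
  (2 + 8 * b) / (((n : ℝ) - 1) * ((n : ℝ) - 4)) +
    4 / (n : ℝ) * (2 * b + ((n : ℝ) - 2) * aFun n b)

/-- The quantity `P(b) = 2(1+(n-2)b)²/(1+2(n-1)a(b))`. -/
noncomputable def Pcoef (n : ℕ) (b : ℝ) : ℝ :=
  2 * (1 + ((n : ℝ) - 2) * b) ^ 2 / (1 + 2 * ((n : ℝ) - 1) * aFun n b)

set_option maxHeartbeats 4000000 in
/-- for `9 ≤ n ≤ 11` and `0 < b ≤ 1/(2n+2)`,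
`(1 + (A(b)/2)√(n(n-2))) · (1/P(b)) ≤ ω(b)/4`. -/
theorem stmt_7 (n : ℕ) (hn9 : 9 ≤ n) (hn11 : n ≤ 11) (b : ℝ)
    (hb0 : 0 < b) (hb : b ≤ 1 / (2 * (n : ℝ) + 2)) :
    (1 + AFun n b / 2 * Real.sqrt ((n : ℝ) * ((n : ℝ) - 2))) * (1 / Pcoef n b) ≤
      omegaFun n b / 4 := by
  interval_cases n
  · -- n = 9
    norm_num at hb ⊢
    have hB : b ≤ 1/20 := by linarith
    have hb' : (0:ℝ) ≤ b := hb0.le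
    have hs : (0:ℝ) ≤ 1/20 - b := by linarith
    have hd : (0:ℝ) < 2 + 6 * b := by linarith
    have h1b : (0:ℝ) < 1 + 7 * b := by linarith
    have ha : aFun 9 b = b * (2 + 7*b)^2 / (2*(2+6*b)) := by simp only [aFun]; norm_num
    have hapos : 0 < aFun 9 b := by rw [ha]; positivity
    have hrho_eq : rhoFun 9 b = (378432*b + 9393408*b^2 + 94587264*b^3 + 496005120*b^4 + 1432759104*b^5 + 2167264512*b^6 + 1344252672*b^7) / (419904 + 11757312*b + 130170240*b^2 + 732312576*b^3 + 2225911104*b^4 + 3491921664*b^5 + 2222131968*b^6) := by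
      have hx : (0:ℝ) < 1 + 16 * (b * (2 + 7*b)^2 / (2*(2+6*b))) := by positivity
      rw [rhoFun, gammaFun, ha]; norm_num; field_simp; ring
    have hDpos : (0:ℝ) < 419904 + 11757312*b + 130170240*b^2 + 732312576*b^3 + 2225911104*b^4 + 3491921664*b^5 + 2222131968*b^6 := by positivity
    have hrho_pos : 0 < rhoFun 9 b := by rw [hrho_eq]; positivity
    have hrho_le : rhoFun 9 b ≤ b * ((4507/5000) - (1963/1000)*b) := by
      rw [hrho_eq, div_le_iff₀ hDpos]
      have ha1 : (0:ℝ) ≤ 88915968000 * (b^1 * (1/20 - b)^7) := mul_nonneg (by norm_num) (mul_nonneg (pow_nonneg hb' 1) (pow_nonneg hs 7))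
      have ha2 : (0:ℝ) ≤ 24965546803200 * (b^2 * (1/20 - b)^6) := mul_nonneg (by norm_num) (mul_nonneg (pow_nonneg hb' 2) (pow_nonneg hs 6))
      have ha3 : (0:ℝ) ≤ 146865523507200 * (b^3 * (1/20 - b)^5) := mul_nonneg (by norm_num) (mul_nonneg (pow_nonneg hb' 3) (pow_nonneg hs 5))
      have ha4 : (0:ℝ) ≤ 348328835149824 * (b^4 * (1/20 - b)^4) := mul_nonneg (by norm_num) (mul_nonneg (pow_nonneg hb' 4) (pow_nonneg hs 4))
      have ha5 : (0:ℝ) ≤ (2069740816694784/5) * (b^5 * (1/20 - b)^3) := mul_nonneg (by norm_num) (mul_nonneg (pow_nonneg hb' 5) (pow_nonneg hs 3))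
      have ha6 : (0:ℝ) ≤ (6163877588535936/25) * (b^6 * (1/20 - b)^2) := mul_nonneg (by norm_num) (mul_nonneg (pow_nonneg hb' 6) (pow_nonneg hs 2))
      have ha7 : (0:ℝ) ≤ (7412548983706368/125) * (b^7 * (1/20 - b)^1) := mul_nonneg (by norm_num) (mul_nonneg (pow_nonneg hb' 7) (pow_nonneg hs 1))
      have ha8 : (0:ℝ) ≤ (8728678607328/25) * (b^8 * (1/20 - b)^0) := mul_nonneg (by norm_num) (mul_nonneg (pow_nonneg hb' 8) (pow_nonneg hs 0))
      linarith
    have hPval : Pcoef 9 b = 2*(1+7*b)^2/(1 + 16*aFun 9 b) := by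
      simp only [Pcoef]; norm_num
    have hPinv : (0:ℝ) ≤ (Pcoef 9 b)⁻¹ := by rw [hPval]; positivity
    have hApos : (0:ℝ) ≤ AFun 9 b := by
      simp only [AFun]; norm_num; positivity
    have hD1pos : (0:ℝ) < 1280 + 25600*b + 181760*b^2 + 537600*b^3 + 564480*b^4 := by positivity
    have hC1 : (1 + AFun 9 b * 8 / 2) * (Pcoef 9 b)⁻¹ ≤ (6/5) := by
      have e1 : (1 + AFun 9 b * 8 / 2) * (Pcoef 9 b)⁻¹
          = (768 + 27648*b + (3583744/9)*b^2 + (26356736/9)*b^3 + (104340992/9)*b^4 + (211441664/9)*b^5 + (172103680/9)*b^6) / (1280 + 25600*b + 181760*b^2 + 537600*b^3 + 564480*b^4) := by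
        rw [hPval, AFun, ha]; norm_num; field_simp; ring
      rw [e1, div_le_iff₀ hD1pos]
      have hc0 : (0:ℝ) ≤ 49152000000 * (b^0 * (1/20 - b)^6) := mul_nonneg (by norm_num) (mul_nonneg (pow_nonneg hb' 0) (pow_nonneg hs 6))
      have hc1 : (0:ℝ) ≤ 304742400000 * (b^1 * (1/20 - b)^5) := mul_nonneg (by norm_num) (mul_nonneg (pow_nonneg hb' 1) (pow_nonneg hs 5))
      have hc2 : (0:ℝ) ≤ (6818570240000/9) * (b^2 * (1/20 - b)^4) := mul_nonneg (by norm_num) (mul_nonneg (pow_nonneg hb' 2) (pow_nonneg hs 4))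
      have hc3 : (0:ℝ) ≤ (8530419712000/9) * (b^3 * (1/20 - b)^3) := mul_nonneg (by norm_num) (mul_nonneg (pow_nonneg hb' 3) (pow_nonneg hs 3))
      have hc4 : (0:ℝ) ≤ (5431835852800/9) * (b^4 * (1/20 - b)^2) := mul_nonneg (by norm_num) (mul_nonneg (pow_nonneg hb' 4) (pow_nonneg hs 2))
      have hc5 : (0:ℝ) ≤ 164807188480 * (b^5 * (1/20 - b)^1) := mul_nonneg (by norm_num) (mul_nonneg (pow_nonneg hb' 5) (pow_nonneg hs 1))
      have hc6 : (0:ℝ) ≤ 7046645760 * (b^6 * (1/20 - b)^0) := mul_nonneg (by norm_num) (mul_nonneg (pow_nonneg hb' 6) (pow_nonneg hs 0))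
      linarith
    have hQeq : omegaFun 9 b = Real.sqrt ((27*(2+7*b)*(b*(1+7*b)^2)) / (8*81*rhoFun 9 b^3*(2+6*b)^2)) := by
      rw [omegaFun]; congr 1; push_cast; ring
    have hDqpos : (0:ℝ) < 8*81*rhoFun 9 b^3*(2+6*b)^2 := by positivity
    have homega : 4 * (6/5) ≤ omegaFun 9 b := by
      rw [hQeq, Real.le_sqrt' (by norm_num), le_div_iff₀ hDqpos]
      have hcube : rhoFun 9 b ^ 3 ≤ (b * ((4507/5000) - (1963/1000)*b))^3 :=
        pow_le_pow_left₀ hrho_pos.le hrho_le 3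
      have hstep : (4*(6/5):ℝ)^2 * (8*81*rhoFun 9 b^3*(2+6*b)^2)
          ≤ (4*(6/5):ℝ)^2 * (8*81*(b * ((4507/5000) - (1963/1000)*b))^3*(2+6*b)^2) := by
        have hmm := mul_le_mul_of_nonneg_right hcube (by positivity : (0:ℝ) ≤ (2+6*b)^2)
        linarith [hmm]
      have hg1 : (0:ℝ) ≤ 69120000000 * (b^1 * (1/20 - b)^7) := mul_nonneg (by norm_num) (mul_nonneg (pow_nonneg hb' 1) (pow_nonneg hs 7))
      have hg2 : (0:ℝ) ≤ 544320000000 * (b^2 * (1/20 - b)^6) := mul_nonneg (by norm_num) (mul_nonneg (pow_nonneg hb' 2) (pow_nonneg hs 6))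
      have hg3 : (0:ℝ) ≤ (3303455442051391488/1953125) * (b^3 * (1/20 - b)^5) := mul_nonneg (by norm_num) (mul_nonneg (pow_nonneg hb' 3) (pow_nonneg hs 5))
      have hg4 : (0:ℝ) ≤ (26527919518197395712/9765625) * (b^4 * (1/20 - b)^4) := mul_nonneg (by norm_num) (mul_nonneg (pow_nonneg hb' 4) (pow_nonneg hs 4))
      have hg5 : (0:ℝ) ≤ (118404913909424297472/48828125) * (b^5 * (1/20 - b)^3) := mul_nonneg (by norm_num) (mul_nonneg (pow_nonneg hb' 5) (pow_nonneg hs 3))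
      have hg6 : (0:ℝ) ≤ (11486053929980439936/9765625) * (b^6 * (1/20 - b)^2) := mul_nonneg (by norm_num) (mul_nonneg (pow_nonneg hb' 6) (pow_nonneg hs 2))
      have hg7 : (0:ℝ) ≤ (524527405371655056/1953125) * (b^7 * (1/20 - b)^1) := mul_nonneg (by norm_num) (mul_nonneg (pow_nonneg hb' 7) (pow_nonneg hs 1))
      have hg8 : (0:ℝ) ≤ (6653530944113292/390625) * (b^8 * (1/20 - b)^0) := mul_nonneg (by norm_num) (mul_nonneg (pow_nonneg hb' 8) (pow_nonneg hs 0))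
      linarith [hstep, hg1, hg2, hg3, hg4, hg5, hg6, hg7, hg8]
    have hsqrt : Real.sqrt (63:ℝ) ≤ 8 := by
      rw [show (8:ℝ) = Real.sqrt (64) by rw [show (64:ℝ) = 8^2 by norm_num, Real.sqrt_sq (by norm_num)]]
      exact Real.sqrt_le_sqrt (by norm_num)
    calc (1 + AFun 9 b / 2 * Real.sqrt (63:ℝ)) * (Pcoef 9 b)⁻¹
        ≤ (1 + AFun 9 b * 8 / 2) * (Pcoef 9 b)⁻¹ := by
          apply mul_le_mul_of_nonneg_right _ hPinv
          nlinarith [mul_le_mul_of_nonneg_left hsqrt (by linarith : (0:ℝ) ≤ AFun 9 b / 2)]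
      _ ≤ (6/5) := hC1
      _ = (4 * (6/5)) / 4 := by norm_num
      _ ≤ omegaFun 9 b / 4 := by linarith

  · -- n = 10
    norm_num at hb ⊢
    have hB : b ≤ 1/22 := by linarith
    have hb' : (0:ℝ) ≤ b := hb0.le
    have hs : (0:ℝ) ≤ 1/22 - b := by linarith
    have hd : (0:ℝ) < 2 + 7 * b := by linarith
    have h1b : (0:ℝ) < 1 + 8 * b := by linarith
    have ha : aFun 10 b = b * (2 + 8*b)^2 / (2*(2+7*b)) := by simp only [aFun]; norm_num
    have hapos : 0 < aFun 10 b := by rw [ha]; positivity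
    have hrho_eq : rhoFun 10 b = (582400*b + 16764800*b^2 + 195892800*b^3 + 1192330400*b^4 + 3998310400*b^5 + 7022131200*b^6 + 5057740800*b^7) / (640000 + 20480000*b + 260160000*b^2 + 1685120000*b^3 + 5912200000*b^4 + 10725120000*b^5 + 7902720000*b^6) := by
      have hx : (0:ℝ) < 1 + 18 * (b * (2 + 8*b)^2 / (2*(2+7*b))) := by positivity
      rw [rhoFun, gammaFun, ha]; norm_num; field_simp; ring
    have hDpos : (0:ℝ) < 640000 + 20480000*b + 260160000*b^2 + 1685120000*b^3 + 5912200000*b^4 + 10725120000*b^5 + 7902720000*b^6 := by positivity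
    have hrho_pos : 0 < rhoFun 10 b := by rw [hrho_eq]; positivity
    have hrho_le : rhoFun 10 b ≤ b * ((4551/5000) - (399/200)*b) := by
      rw [hrho_eq, div_le_iff₀ hDpos]
      have ha1 : (0:ℝ) ≤ 319277809664 * (b^1 * (1/22 - b)^7) := mul_nonneg (by norm_num) (mul_nonneg (pow_nonneg hb' 1) (pow_nonneg hs 7))
      have ha2 : (0:ℝ) ≤ 70183067615232 * (b^2 * (1/22 - b)^6) := mul_nonneg (by norm_num) (mul_nonneg (pow_nonneg hb' 2) (pow_nonneg hs 6))
      have ha3 : (0:ℝ) ≤ 414636988035072 * (b^3 * (1/22 - b)^5) := mul_nonneg (by norm_num) (mul_nonneg (pow_nonneg hb' 3) (pow_nonneg hs 5))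
      have ha4 : (0:ℝ) ≤ 990020705636864 * (b^4 * (1/22 - b)^4) := mul_nonneg (by norm_num) (mul_nonneg (pow_nonneg hb' 4) (pow_nonneg hs 4))
      have ha5 : (0:ℝ) ≤ 1185128879009856 * (b^5 * (1/22 - b)^3) := mul_nonneg (by norm_num) (mul_nonneg (pow_nonneg hb' 5) (pow_nonneg hs 3))
      have ha6 : (0:ℝ) ≤ 711208499801184 * (b^6 * (1/22 - b)^2) := mul_nonneg (by norm_num) (mul_nonneg (pow_nonneg hb' 6) (pow_nonneg hs 2))
      have ha7 : (0:ℝ) ≤ 172367957380608 * (b^7 * (1/22 - b)^1) := mul_nonneg (by norm_num) (mul_nonneg (pow_nonneg hb' 7) (pow_nonneg hs 1))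
      have ha8 : (0:ℝ) ≤ 1025063255520 * (b^8 * (1/22 - b)^0) := mul_nonneg (by norm_num) (mul_nonneg (pow_nonneg hb' 8) (pow_nonneg hs 0))
      linarith
    have hPval : Pcoef 10 b = 2*(1+8*b)^2/(1 + 18*aFun 10 b) := by
      simp only [Pcoef]; norm_num
    have hPinv : (0:ℝ) ≤ (Pcoef 10 b)⁻¹ := by rw [hPval]; positivity
    have hApos : (0:ℝ) ≤ AFun 10 b := by
      simp only [AFun]; norm_num; positivity
    have hD1pos : (0:ℝ) < 1728 + 39744*b + 325296*b^2 + 1112832*b^3 + 1354752*b^4 := by positivity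
    have hC1 : (1 + AFun 10 b * 9 / 2) * (Pcoef 10 b)⁻¹ ≤ (6/5) := by
      have e1 : (1 + AFun 10 b * 9 / 2) * (Pcoef 10 b)⁻¹
          = (1008 + 41328*b + (3400956/5)*b^2 + (28685952/5)*b^3 + (130657536/5)*b^4 + 61046784*b^5 + (286654464/5)*b^6) / (1728 + 39744*b + 325296*b^2 + 1112832*b^3 + 1354752*b^4) := by
        rw [hPval, AFun, ha]; norm_num; field_simp; ring
      rw [e1, div_le_iff₀ hD1pos]
      have hc0 : (0:ℝ) ≤ (604088128512/5) * (b^0 * (1/22 - b)^6) := mul_nonneg (by norm_num) (mul_nonneg (pow_nonneg hb' 0) (pow_nonneg hs 6))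
      have hc1 : (0:ℝ) ≤ 757707591168 * (b^1 * (1/22 - b)^5) := mul_nonneg (by norm_num) (mul_nonneg (pow_nonneg hb' 1) (pow_nonneg hs 5))
      have hc2 : (0:ℝ) ≤ 1908377748288 * (b^2 * (1/22 - b)^4) := mul_nonneg (by norm_num) (mul_nonneg (pow_nonneg hb' 2) (pow_nonneg hs 4))
      have hc3 : (0:ℝ) ≤ 2425917314304 * (b^3 * (1/22 - b)^3) := mul_nonneg (by norm_num) (mul_nonneg (pow_nonneg hb' 3) (pow_nonneg hs 3))
      have hc4 : (0:ℝ) ≤ (7902180849024/5) * (b^4 * (1/22 - b)^2) := mul_nonneg (by norm_num) (mul_nonneg (pow_nonneg hb' 4) (pow_nonneg hs 2))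
      have hc5 : (0:ℝ) ≤ 451656158976 * (b^5 * (1/22 - b)^1) := mul_nonneg (by norm_num) (mul_nonneg (pow_nonneg hb' 5) (pow_nonneg hs 1))
      have hc6 : (0:ℝ) ≤ 25592189760 * (b^6 * (1/22 - b)^0) := mul_nonneg (by norm_num) (mul_nonneg (pow_nonneg hb' 6) (pow_nonneg hs 0))
      linarith
    have hQeq : omegaFun 10 b = Real.sqrt ((27*(2+8*b)*(b*(1+8*b)^2)) / (8*100*rhoFun 10 b^3*(2+7*b)^2)) := by
      rw [omegaFun]; congr 1; push_cast; ring
    have hDqpos : (0:ℝ) < 8*100*rhoFun 10 b^3*(2+7*b)^2 := by positivity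
    have homega : 4 * (6/5) ≤ omegaFun 10 b := by
      rw [hQeq, Real.le_sqrt' (by norm_num), le_div_iff₀ hDqpos]
      have hcube : rhoFun 10 b ^ 3 ≤ (b * ((4551/5000) - (399/200)*b))^3 :=
        pow_le_pow_left₀ hrho_pos.le hrho_le 3
      have hstep : (4*(6/5):ℝ)^2 * (8*100*rhoFun 10 b^3*(2+7*b)^2)
          ≤ (4*(6/5):ℝ)^2 * (8*100*(b * ((4551/5000) - (399/200)*b))^3*(2+7*b)^2) := by
        have hmm := mul_le_mul_of_nonneg_right hcube (by positivity : (0:ℝ) ≤ (2+7*b)^2)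
        linarith [hmm]
      have hg1 : (0:ℝ) ≤ 134695325952 * (b^1 * (1/22 - b)^7) := mul_nonneg (by norm_num) (mul_nonneg (pow_nonneg hb' 1) (pow_nonneg hs 7))
      have hg2 : (0:ℝ) ≤ 1065317577984 * (b^2 * (1/22 - b)^6) := mul_nonneg (by norm_num) (mul_nonneg (pow_nonneg hb' 2) (pow_nonneg hs 6))
      have hg3 : (0:ℝ) ≤ (808692528869363457792/244140625) * (b^3 * (1/22 - b)^5) := mul_nonneg (by norm_num) (mul_nonneg (pow_nonneg hb' 3) (pow_nonneg hs 5))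
      have hg4 : (0:ℝ) ≤ (1292554991597450118912/244140625) * (b^4 * (1/22 - b)^4) := mul_nonneg (by norm_num) (mul_nonneg (pow_nonneg hb' 4) (pow_nonneg hs 4))
      have hg5 : (0:ℝ) ≤ (1136878555962867433056/244140625) * (b^5 * (1/22 - b)^3) := mul_nonneg (by norm_num) (mul_nonneg (pow_nonneg hb' 5) (pow_nonneg hs 3))
      have hg6 : (0:ℝ) ≤ (531433714667354530416/244140625) * (b^6 * (1/22 - b)^2) := mul_nonneg (by norm_num) (mul_nonneg (pow_nonneg hb' 6) (pow_nonneg hs 2))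
      have hg7 : (0:ℝ) ≤ (109289962051301933352/244140625) * (b^7 * (1/22 - b)^1) := mul_nonneg (by norm_num) (mul_nonneg (pow_nonneg hb' 7) (pow_nonneg hs 1))
      have hg8 : (0:ℝ) ≤ (3671393171775612372/244140625) * (b^8 * (1/22 - b)^0) := mul_nonneg (by norm_num) (mul_nonneg (pow_nonneg hb' 8) (pow_nonneg hs 0))
      linarith [hstep, hg1, hg2, hg3, hg4, hg5, hg6, hg7, hg8]
    have hsqrt : Real.sqrt (80:ℝ) ≤ 9 := by
      rw [show (9:ℝ) = Real.sqrt (81) by rw [show (81:ℝ) = 9^2 by norm_num, Real.sqrt_sq (by norm_num)]]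
      exact Real.sqrt_le_sqrt (by norm_num)
    calc (1 + AFun 10 b / 2 * Real.sqrt (80:ℝ)) * (Pcoef 10 b)⁻¹
        ≤ (1 + AFun 10 b * 9 / 2) * (Pcoef 10 b)⁻¹ := by
          apply mul_le_mul_of_nonneg_right _ hPinv
          nlinarith [mul_le_mul_of_nonneg_left hsqrt (by linarith : (0:ℝ) ≤ AFun 10 b / 2)]
      _ ≤ (6/5) := hC1
      _ = (4 * (6/5)) / 4 := by norm_num
      _ ≤ omegaFun 10 b / 4 := by linarith

  · -- n = 11
    norm_num at hb ⊢
    have hB : b ≤ 1/24 := by linarith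
    have hb' : (0:ℝ) ≤ b := hb0.le
    have hs : (0:ℝ) ≤ 1/24 - b := by linarith
    have hd : (0:ℝ) < 2 + 8 * b := by linarith
    have h1b : (0:ℝ) < 1 + 9 * b := by linarith
    have ha : aFun 11 b = b * (2 + 9*b)^2 / (2*(2+8*b)) := by simp only [aFun]; norm_num
    have hapos : 0 < aFun 11 b := by rw [ha]; positivity
    have hrho_eq : rhoFun 11 b = (859584*b + 28157184*b^2 + 374546304*b^3 + 2595641664*b^4 + 9911049984*b^5 + 19821542400*b^6 + 16258682880*b^7) / (937024 + 33732864*b + 483504384*b^2 + 3542887744*b^3 + 14089092864*b^4 + 29010263040*b^5 + 24287662080*b^6) := by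
      have hx : (0:ℝ) < 1 + 20 * (b * (2 + 9*b)^2 / (2*(2+8*b))) := by positivity
      rw [rhoFun, gammaFun, ha]; norm_num; field_simp; ring
    have hDpos : (0:ℝ) < 937024 + 33732864*b + 483504384*b^2 + 3542887744*b^3 + 14089092864*b^4 + 29010263040*b^5 + 24287662080*b^6 := by positivity
    have hrho_pos : 0 < rhoFun 11 b := by rw [hrho_eq]; positivity
    have hrho_le : rhoFun 11 b ≤ b * ((367/400) - (101/50)*b) := by
      rw [hrho_eq, div_le_iff₀ hDpos]
      have ha1 : (0:ℝ) ≤ (15538965184512/25) * (b^1 * (1/24 - b)^7) := mul_nonneg (by norm_num) (mul_nonneg (pow_nonneg hb' 1) (pow_nonneg hs 7))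
      have ha2 : (0:ℝ) ≤ (881651286540288/5) * (b^2 * (1/24 - b)^6) := mul_nonneg (by norm_num) (mul_nonneg (pow_nonneg hb' 2) (pow_nonneg hs 6))
      have ha3 : (0:ℝ) ≤ (26308069267341312/25) * (b^3 * (1/24 - b)^5) := mul_nonneg (by norm_num) (mul_nonneg (pow_nonneg hb' 3) (pow_nonneg hs 5))
      have ha4 : (0:ℝ) ≤ (63291880844476416/25) * (b^4 * (1/24 - b)^4) := mul_nonneg (by norm_num) (mul_nonneg (pow_nonneg hb' 4) (pow_nonneg hs 4))
      have ha5 : (0:ℝ) ≤ (76276986531913728/25) * (b^5 * (1/24 - b)^3) := mul_nonneg (by norm_num) (mul_nonneg (pow_nonneg hb' 5) (pow_nonneg hs 3))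
      have ha6 : (0:ℝ) ≤ (46050868832145408/25) * (b^6 * (1/24 - b)^2) := mul_nonneg (by norm_num) (mul_nonneg (pow_nonneg hb' 6) (pow_nonneg hs 2))
      have ha7 : (0:ℝ) ≤ (11207175659108352/25) * (b^7 * (1/24 - b)^1) := mul_nonneg (by norm_num) (mul_nonneg (pow_nonneg hb' 7) (pow_nonneg hs 1))
      have ha8 : (0:ℝ) ≤ 2221511491584 * (b^8 * (1/24 - b)^0) := mul_nonneg (by norm_num) (mul_nonneg (pow_nonneg hb' 8) (pow_nonneg hs 0))
      linarith
    have hPval : Pcoef 11 b = 2*(1+9*b)^2/(1 + 20*aFun 11 b) := by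
      simp only [Pcoef]; norm_num
    have hPinv : (0:ℝ) ≤ (Pcoef 11 b)⁻¹ := by rw [hPval]; positivity
    have hApos : (0:ℝ) ≤ AFun 11 b := by
      simp only [AFun]; norm_num; positivity
    have hD1pos : (0:ℝ) < 2240 + 58240*b + 539840*b^2 + 2096640*b^3 + 2903040*b^4 := by positivity
    have hC1 : (1 + AFun 11 b * 10 / 2) * (Pcoef 11 b)⁻¹ ≤ (119/100) := by
      have e1 : (1 + AFun 11 b * 10 / 2) * (Pcoef 11 b)⁻¹
          = (1280 + 58880*b + (11990400/11)*b^2 + 10369440*b^3 + 53395200*b^4 + (1553644800/11)*b^5 + (1653372000/11)*b^6) / (2240 + 58240*b + 539840*b^2 + 2096640*b^3 + 2903040*b^4) := by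
        rw [hPval, AFun, ha]; norm_num; field_simp; ring
      rw [e1, div_le_iff₀ hD1pos]
      have hc0 : (0:ℝ) ≤ (1323961417728/5) * (b^0 * (1/24 - b)^6) := mul_nonneg (by norm_num) (mul_nonneg (pow_nonneg hb' 0) (pow_nonneg hs 6))
      have hc1 : (0:ℝ) ≤ 1671768834048 * (b^1 * (1/24 - b)^5) := mul_nonneg (by norm_num) (mul_nonneg (pow_nonneg hb' 1) (pow_nonneg hs 5))
      have hc2 : (0:ℝ) ≤ (233114645495808/55) * (b^2 * (1/24 - b)^4) := mul_nonneg (by norm_num) (mul_nonneg (pow_nonneg hb' 2) (pow_nonneg hs 4))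
      have hc3 : (0:ℝ) ≤ (298270142152704/55) * (b^3 * (1/24 - b)^3) := mul_nonneg (by norm_num) (mul_nonneg (pow_nonneg hb' 3) (pow_nonneg hs 3))
      have hc4 : (0:ℝ) ≤ (195559660634112/55) * (b^4 * (1/24 - b)^2) := mul_nonneg (by norm_num) (mul_nonneg (pow_nonneg hb' 4) (pow_nonneg hs 2))
      have hc5 : (0:ℝ) ≤ (5111460329472/5) * (b^5 * (1/24 - b)^1) := mul_nonneg (by norm_num) (mul_nonneg (pow_nonneg hb' 5) (pow_nonneg hs 1))
      have hc6 : (0:ℝ) ≤ (290667551328/5) * (b^6 * (1/24 - b)^0) := mul_nonneg (by norm_num) (mul_nonneg (pow_nonneg hb' 6) (pow_nonneg hs 0))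
      linarith
    have hQeq : omegaFun 11 b = Real.sqrt ((27*(2+9*b)*(b*(1+9*b)^2)) / (8*121*rhoFun 11 b^3*(2+8*b)^2)) := by
      rw [omegaFun]; congr 1; push_cast; ring
    have hDqpos : (0:ℝ) < 8*121*rhoFun 11 b^3*(2+8*b)^2 := by positivity
    have homega : 4 * (119/100) ≤ omegaFun 11 b := by
      rw [hQeq, Real.le_sqrt' (by norm_num), le_div_iff₀ hDqpos]
      have hcube : rhoFun 11 b ^ 3 ≤ (b * ((367/400) - (101/50)*b))^3 :=
        pow_le_pow_left₀ hrho_pos.le hrho_le 3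
      have hstep : (4*(119/100):ℝ)^2 * (8*121*rhoFun 11 b^3*(2+8*b)^2)
          ≤ (4*(119/100):ℝ)^2 * (8*121*(b * ((367/400) - (101/50)*b))^3*(2+8*b)^2) := by
        have hmm := mul_le_mul_of_nonneg_right hcube (by positivity : (0:ℝ) ≤ (2+8*b)^2)
        linarith [hmm]
      have hg1 : (0:ℝ) ≤ 247669456896 * (b^1 * (1/24 - b)^7) := mul_nonneg (by norm_num) (mul_nonneg (pow_nonneg hb' 1) (pow_nonneg hs 7))
      have hg2 : (0:ℝ) ≤ 1965876314112 * (b^2 * (1/24 - b)^6) := mul_nonneg (by norm_num) (mul_nonneg (pow_nonneg hb' 2) (pow_nonneg hs 6))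
      have hg3 : (0:ℝ) ≤ (59807776197356280576/9765625) * (b^3 * (1/24 - b)^5) := mul_nonneg (by norm_num) (mul_nonneg (pow_nonneg hb' 3) (pow_nonneg hs 5))
      have hg4 : (0:ℝ) ≤ (95478858699652249344/9765625) * (b^4 * (1/24 - b)^4) := mul_nonneg (by norm_num) (mul_nonneg (pow_nonneg hb' 4) (pow_nonneg hs 4))
      have hg5 : (0:ℝ) ≤ (83349211213445102784/9765625) * (b^5 * (1/24 - b)^3) := mul_nonneg (by norm_num) (mul_nonneg (pow_nonneg hb' 5) (pow_nonneg hs 3))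
      have hg6 : (0:ℝ) ≤ (304589397878217216/78125) * (b^6 * (1/24 - b)^2) := mul_nonneg (by norm_num) (mul_nonneg (pow_nonneg hb' 6) (pow_nonneg hs 2))
      have hg7 : (0:ℝ) ≤ (462813856124928/625) * (b^7 * (1/24 - b)^1) := mul_nonneg (by norm_num) (mul_nonneg (pow_nonneg hb' 7) (pow_nonneg hs 1))
      have hg8 : (0:ℝ) ≤ (29014847488/5) * (b^8 * (1/24 - b)^0) := mul_nonneg (by norm_num) (mul_nonneg (pow_nonneg hb' 8) (pow_nonneg hs 0))
      linarith [hstep, hg1, hg2, hg3, hg4, hg5, hg6, hg7, hg8]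
    have hsqrt : Real.sqrt (99:ℝ) ≤ 10 := by
      rw [show (10:ℝ) = Real.sqrt (100) by rw [show (100:ℝ) = 10^2 by norm_num, Real.sqrt_sq (by norm_num)]]
      exact Real.sqrt_le_sqrt (by norm_num)
    calc (1 + AFun 11 b / 2 * Real.sqrt (99:ℝ)) * (Pcoef 11 b)⁻¹
        ≤ (1 + AFun 11 b * 10 / 2) * (Pcoef 11 b)⁻¹ := by
          apply mul_le_mul_of_nonneg_right _ hPinv
          nlinarith [mul_le_mul_of_nonneg_left hsqrt (by linarith : (0:ℝ) ≤ AFun 11 b / 2)]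
      _ ≤ (119/100) := hC1
      _ = (4 * (119/100)) / 4 := by norm_num
      _ ≤ omegaFun 11 b / 4 := by linarith
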